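/- arXiv:1802.04420 — 4 statements merged into one kernel-verified Lean document; each statement's English description precedes it below -/
import Mathlib

section
/- Let M ∈ ℝ^{d×k} have SVD M = UΣV^T with U ∈ ℝ^{d×k}, Σ ∈ ℝ^{k×k} diagonal, V ∈ ℝ^{k×k}, satisfying U^TU = V^TV = VV^T = I. Define the gradient descent recursion w_1^{t+1} = w_1^t + αM^T w_2^t and w_2^{t+1} = w_2^t + αM w_1^t with initial vectors w_1^0 ∈ ℝ^k, w_2^0 ∈ ℝ^d. Then for all t ≥ 0: w_1^t = (1/2)V(Λ^{+,t} V^T w_1^0 + Λ^{-,t} U^T w_2^0) and w_2^t = (1/2)U(Λ^{-,t} V^T w_1^0 + Λ^{+,t} U^T w_2^0) - UU^T w_2^0 + w_2^0, where Λ^{+,t} = (I+αΣ)^t + (I-αΣ)^t and Λ^{-,t} = (I+αΣ)^t - (I-αΣ)^t. -/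
/-!
In the coordinates `a = Vᵀ w₁` and `b = Uᵀ w₂` the iteration becomes the coupled system
`a ← a + α S b`, `b ← b + α S a` with `S = Σ` symmetric, so `a + b` evolves by `1 + αS` and
`a - b` by `1 - αS`; averaging the two gives `a` and `b`. The vector `w₁` is recovered as `V a`
because `V Vᵀ = 1`, and `w₂` as `U b` plus its component `w₂ - U Uᵀ w₂` orthogonal to the range
of `U`, which never changes because every increment `α M w₁` lies in that range.
-/

open Matrix

namespace Matrix

variable {m n l R : Type*} [Fintype m] [Fintype n] [Fintype l] [DecidableEq n]

theorem eq_pow_mulVec_of_forall_succ [CommRing R] {A : Matrix n n R} {x : ℕ → n → R}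
    (hx : ∀ t, x (t + 1) = A *ᵥ x t) (t : ℕ) : x t = (A ^ t) *ᵥ x 0 := by
  induction t with
  | zero => simp
  | succ t ih => rw [hx, ih, mulVec_mulVec, pow_succ']

section Coupled

variable [CommRing R] {S : Matrix n n R} {α : R} {a b : ℕ → n → R}

theorem add_eq_pow_mulVec_of_coupled (ha : ∀ t, a (t + 1) = a t + α • (S *ᵥ b t))
    (hb : ∀ t, b (t + 1) = b t + α • (S *ᵥ a t)) (t : ℕ) :
    a t + b t = (1 + α • S) ^ t *ᵥ (a 0 + b 0) :=
  eq_pow_mulVec_of_forall_succ (x := a + b) (fun t => by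
    simp only [Pi.add_apply, ha, hb, add_mulVec, one_mulVec, smul_mulVec, mulVec_add]
    abel) t

theorem sub_eq_pow_mulVec_of_coupled (ha : ∀ t, a (t + 1) = a t + α • (S *ᵥ b t))
    (hb : ∀ t, b (t + 1) = b t + α • (S *ᵥ a t)) (t : ℕ) :
    a t - b t = (1 - α • S) ^ t *ᵥ (a 0 - b 0) :=
  eq_pow_mulVec_of_forall_succ (x := a - b) (fun t => by
    simp only [Pi.sub_apply, ha, hb, sub_mulVec, one_mulVec, smul_mulVec, mulVec_sub]
    abel) t

end Coupled

theorem eq_half_smul_of_coupled [Field R] [CharZero R] {S : Matrix n n R} {α : R}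
    {a b : ℕ → n → R} (ha : ∀ t, a (t + 1) = a t + α • (S *ᵥ b t))
    (hb : ∀ t, b (t + 1) = b t + α • (S *ᵥ a t)) (t : ℕ) :
    a t = (1 / 2 : R) • (((1 + α • S) ^ t + (1 - α • S) ^ t) *ᵥ a 0
      + ((1 + α • S) ^ t - (1 - α • S) ^ t) *ᵥ b 0) := by
  have hsum := add_eq_pow_mulVec_of_coupled ha hb t
  have hdiff := sub_eq_pow_mulVec_of_coupled ha hb t
  rw [mulVec_add] at hsum
  rw [mulVec_sub] at hdiff
  rw [add_mulVec, sub_mulVec]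
  linear_combination (norm := module) (1 / 2 : R) • hsum + (1 / 2 : R) • hdiff

section GradientDescent

variable [CommRing R] {M : Matrix m l R} {U : Matrix m n R} {S : Matrix n n R}
  {V : Matrix l n R} {α : R} {w₁ : ℕ → l → R} {w₂ : ℕ → m → R}

theorem transpose_mulVec_succ_of_svd_right (hM : M = U * S * Vᵀ) (hS : Sᵀ = S) (hV : Vᵀ * V = 1)
    (hw₁ : ∀ t, w₁ (t + 1) = w₁ t + α • (Mᵀ *ᵥ w₂ t)) (t : ℕ) :
    Vᵀ *ᵥ w₁ (t + 1) = Vᵀ *ᵥ w₁ t + α • (S *ᵥ (Uᵀ *ᵥ w₂ t)) := by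
  rw [hw₁, mulVec_add, mulVec_smul, hM, transpose_mul, transpose_mul, transpose_transpose, hS,
    mulVec_mulVec, mulVec_mulVec, ← Matrix.mul_assoc, ← Matrix.mul_assoc, hV, Matrix.one_mul]

theorem transpose_mulVec_succ_of_svd_left (hM : M = U * S * Vᵀ) (hU : Uᵀ * U = 1)
    (hw₂ : ∀ t, w₂ (t + 1) = w₂ t + α • (M *ᵥ w₁ t)) (t : ℕ) :
    Uᵀ *ᵥ w₂ (t + 1) = Uᵀ *ᵥ w₂ t + α • (S *ᵥ (Vᵀ *ᵥ w₁ t)) := by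
  rw [hw₂, mulVec_add, mulVec_smul, hM, mulVec_mulVec, mulVec_mulVec, ← Matrix.mul_assoc,
    ← Matrix.mul_assoc, hU, Matrix.one_mul]

theorem sub_mulVec_transpose_mulVec_eq_of_svd (hM : M = U * S * Vᵀ) (hU : Uᵀ * U = 1)
    (hw₂ : ∀ t, w₂ (t + 1) = w₂ t + α • (M *ᵥ w₁ t)) (t : ℕ) :
    w₂ t - U *ᵥ (Uᵀ *ᵥ w₂ t) = w₂ 0 - U *ᵥ (Uᵀ *ᵥ w₂ 0) := by
  have hUUM : ∀ v, U *ᵥ (Uᵀ *ᵥ (M *ᵥ v)) = M *ᵥ v := fun v => by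
    simp only [mulVec_mulVec, hM, Matrix.mul_assoc]
    rw [← Matrix.mul_assoc Uᵀ U, hU, Matrix.one_mul]
  induction t with
  | zero => rfl
  | succ t ih =>
    rw [← ih, hw₂, mulVec_add, mulVec_add, mulVec_smul, mulVec_smul, hUUM]
    abel

end GradientDescent

end Matrix

theorem stmt_1_general (d k : ℕ) (α : ℝ)
    (M : Matrix (Fin d) (Fin k) ℝ) (U : Matrix (Fin d) (Fin k) ℝ)
    (σ : Fin k → ℝ) (V : Matrix (Fin k) (Fin k) ℝ)
    (hSVD : M = U * Matrix.diagonal σ * Vᵀ)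
    (hU : Uᵀ * U = 1) (hV : Vᵀ * V = 1) (hV' : V * Vᵀ = 1)
    (w1 : ℕ → Fin k → ℝ) (w2 : ℕ → Fin d → ℝ)
    (hrec1 : ∀ t : ℕ, w1 (t + 1) = w1 t + α • (Mᵀ *ᵥ w2 t))
    (hrec2 : ∀ t : ℕ, w2 (t + 1) = w2 t + α • (M *ᵥ w1 t)) :
    let S : Matrix (Fin k) (Fin k) ℝ := Matrix.diagonal σ
    let Λp : ℕ → Matrix (Fin k) (Fin k) ℝ := fun t => (1 + α • S) ^ t + (1 - α • S) ^ t
    let Λm : ℕ → Matrix (Fin k) (Fin k) ℝ := fun t => (1 + α • S) ^ t - (1 - α • S) ^ t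
    (∀ t : ℕ, w1 t = (1 / 2 : ℝ) • (V *ᵥ (Λp t *ᵥ (Vᵀ *ᵥ w1 0) + Λm t *ᵥ (Uᵀ *ᵥ w2 0)))) ∧
    (∀ t : ℕ, w2 t = (1 / 2 : ℝ) • (U *ᵥ (Λm t *ᵥ (Vᵀ *ᵥ w1 0) + Λp t *ᵥ (Uᵀ *ᵥ w2 0)))
        - (U *ᵥ (Uᵀ *ᵥ w2 0)) + w2 0) := by
  intro S Λp Λm
  have ha := transpose_mulVec_succ_of_svd_right hSVD (diagonal_transpose σ) hV hrec1
  have hb := transpose_mulVec_succ_of_svd_left hSVD hU hrec2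
  have hab := eq_half_smul_of_coupled (a := fun t => Vᵀ *ᵥ w1 t) (b := fun t => Uᵀ *ᵥ w2 t) ha hb
  have hba := eq_half_smul_of_coupled (a := fun t => Uᵀ *ᵥ w2 t) (b := fun t => Vᵀ *ᵥ w1 t) hb ha
  refine ⟨fun t => ?_, fun t => ?_⟩
  · calc w1 t = V *ᵥ (Vᵀ *ᵥ w1 t) := by rw [mulVec_mulVec, hV', one_mulVec]
      _ = _ := by rw [hab t, mulVec_smul]
  · calc w2 t = U *ᵥ (Uᵀ *ᵥ w2 t) + (w2 t - U *ᵥ (Uᵀ *ᵥ w2 t)) := by abel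
      _ = _ := by
        rw [sub_mulVec_transpose_mulVec_eq_of_svd hSVD hU hrec2, hba t,
          mulVec_smul, add_comm (_ *ᵥ Uᵀ *ᵥ w2 0)]
        abel

theorem stmt_1 (d k : ℕ) (hkd : k ≤ d) (α : ℝ) (hα : 0 < α)
    (M : Matrix (Fin d) (Fin k) ℝ) (U : Matrix (Fin d) (Fin k) ℝ)
    (σ : Fin k → ℝ) (V : Matrix (Fin k) (Fin k) ℝ)
    (hSVD : M = U * Matrix.diagonal σ * Vᵀ)
    (hU : Uᵀ * U = 1) (hV : Vᵀ * V = 1) (hV' : V * Vᵀ = 1)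
    (w1 : ℕ → Fin k → ℝ) (w2 : ℕ → Fin d → ℝ)
    (hrec1 : ∀ t : ℕ, w1 (t + 1) = w1 t + α • (Mᵀ *ᵥ w2 t))
    (hrec2 : ∀ t : ℕ, w2 (t + 1) = w2 t + α • (M *ᵥ w1 t)) :
    let S : Matrix (Fin k) (Fin k) ℝ := Matrix.diagonal σ
    let Λp : ℕ → Matrix (Fin k) (Fin k) ℝ := fun t => (1 + α • S) ^ t + (1 - α • S) ^ t
    let Λm : ℕ → Matrix (Fin k) (Fin k) ℝ := fun t => (1 + α • S) ^ t - (1 - α • S) ^ t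
    (∀ t : ℕ, w1 t = (1 / 2 : ℝ) • (V *ᵥ (Λp t *ᵥ (Vᵀ *ᵥ w1 0) + Λm t *ᵥ (Uᵀ *ᵥ w2 0)))) ∧
    (∀ t : ℕ, w2 t = (1 / 2 : ℝ) • (U *ᵥ (Λm t *ᵥ (Vᵀ *ᵥ w1 0) + Λp t *ᵥ (Uᵀ *ᵥ w2 0)))
        - (U *ᵥ (Uᵀ *ᵥ w2 0)) + w2 0) :=
  stmt_1_general d k α M U σ V hSVD hU hV hV' w1 w2 hrec1 hrec2
end

section
/- Let M ∈ ℝ^{d×k} have SVD M = UΣV^T (U^TU = V^TV = VV^T = I_k) with singular values σ_1 ≥ ... ≥ σ_k ≥ 0, σ_1 > 0, and let m be the largest index with σ_m = σ_1. Consider the recursion w_1^{t+1} = w_1^t + αM^T w_2^t, w_2^{t+1} = w_2^t + αM w_1^t with w_2^0 = 0 and α > 0. Then lim_{t→∞} 2w_1^t/(1+ασ_1)^t = V_{:m}V_{:m}^T w_1^0 and lim_{t→∞} 2w_2^t/(1+ασ_1)^t = U_{:m}V_{:m}^T w_1^0, where A_{:m} denotes the first m columns of A. -/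
/-!
In the singular bases the iteration decouples: with `c = Vᵀ w1 0`, the `i`-th coordinates of
`Vᵀ w1 t` and `Uᵀ w2 t` are `cᵢ` times the even and odd parts `((1 + ασᵢ)ᵗ ± (1 - ασᵢ)ᵗ) / 2`
of `(1 + ασᵢ)ᵗ`. After division by `(1 + ασ₁)ᵗ` every power tends to `0` except `(1 + ασᵢ)ᵗ`
with `σᵢ = σ₁`, so exactly the coordinates `cᵢ` with `i < m` survive.
-/

open Matrix Filter Topology

/-- `(evenPow a t, oddPow a t)` is the orbit of `(1, 0)` under `(x, y) ↦ (x + a y, y + a x)`. -/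
noncomputable def evenPow (a : ℝ) (t : ℕ) : ℝ := ((1 + a) ^ t + (1 - a) ^ t) / 2

noncomputable def oddPow (a : ℝ) (t : ℕ) : ℝ := ((1 + a) ^ t - (1 - a) ^ t) / 2

section Scalar

variable (a : ℝ) (t : ℕ)

@[simp] lemma evenPow_zero : evenPow a 0 = 1 := by norm_num [evenPow]

@[simp] lemma oddPow_zero : oddPow a 0 = 0 := by simp [oddPow]

lemma evenPow_succ : evenPow a (t + 1) = evenPow a t + a * oddPow a t := by
  simp only [evenPow, oddPow, pow_succ]; ring

lemma oddPow_succ : oddPow a (t + 1) = oddPow a t + a * evenPow a t := by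
  simp only [evenPow, oddPow, pow_succ]; ring

end Scalar

section Limits

variable {a s : ℝ}

lemma tendsto_one_sub_div_one_add_pow (hs : 0 < s) (ha : 0 ≤ a) (has : a ≤ s) :
    Tendsto (fun t : ℕ => ((1 - a) / (1 + s)) ^ t) atTop (𝓝 0) := by
  refine tendsto_pow_atTop_nhds_zero_of_abs_lt_one ?_
  have h1s : 0 < 1 + s := by linarith
  rw [abs_div, abs_of_pos h1s, div_lt_one h1s, abs_lt]
  constructor <;> linarith

lemma tendsto_one_add_div_one_add_pow (ha : 0 ≤ a) (has : a ≤ s) :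
    Tendsto (fun t : ℕ => ((1 + a) / (1 + s)) ^ t) atTop (𝓝 (if a = s then 1 else 0)) := by
  split_ifs with h
  · subst h
    simp [div_self (by linarith : 1 + a ≠ 0)]
  · refine tendsto_pow_atTop_nhds_zero_of_abs_lt_one ?_
    have has' := lt_of_le_of_ne has h
    rw [abs_div, abs_of_pos (by linarith), abs_of_pos (by linarith), div_lt_one (by linarith)]
    linarith

lemma tendsto_two_div_pow_mul_evenPow (hs : 0 < s) (ha : 0 ≤ a) (has : a ≤ s) :
    Tendsto (fun t : ℕ => 2 / (1 + s) ^ t * evenPow a t) atTop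
      (𝓝 (if a = s then 1 else 0)) := by
  have hsum := (tendsto_one_add_div_one_add_pow ha has).add
    (tendsto_one_sub_div_one_add_pow hs ha has)
  rw [add_zero] at hsum
  refine hsum.congr fun t => ?_
  have : (1 + s) ^ t ≠ 0 := pow_ne_zero _ (by linarith)
  rw [evenPow, div_pow, div_pow]
  field_simp

lemma tendsto_two_div_pow_mul_oddPow (hs : 0 < s) (ha : 0 ≤ a) (has : a ≤ s) :
    Tendsto (fun t : ℕ => 2 / (1 + s) ^ t * oddPow a t) atTop
      (𝓝 (if a = s then 1 else 0)) := by
  have hsub := (tendsto_one_add_div_one_add_pow ha has).sub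
    (tendsto_one_sub_div_one_add_pow hs ha has)
  rw [sub_zero] at hsub
  refine hsub.congr fun t => ?_
  have : (1 + s) ^ t ≠ 0 := pow_ne_zero _ (by linarith)
  rw [oddPow, div_pow, div_pow]
  field_simp

end Limits

section SVD

variable {R ι n p : Type*} [CommSemiring R] [Fintype ι] [DecidableEq ι] [Fintype n] [Fintype p]
  {M : Matrix n p R} {U : Matrix n ι R} {V : Matrix p ι R} {σ : ι → R}

omit [Fintype n] in
lemma mulVec_mulVec_of_eq_mul_diagonal_mul_transpose (hM : M = U * diagonal σ * Vᵀ)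
    (hV : Vᵀ * V = 1) (x : ι → R) : M *ᵥ (V *ᵥ x) = U *ᵥ (σ * x) := by
  rw [hM, mulVec_mulVec, Matrix.mul_assoc, Matrix.mul_assoc, hV, Matrix.mul_one,
    ← mulVec_mulVec]
  congr 1
  ext i
  exact mulVec_diagonal σ x i

omit [Fintype n] [Fintype p] in
lemma transpose_eq_mul_diagonal_mul_transpose (hM : M = U * diagonal σ * Vᵀ) :
    Mᵀ = V * diagonal σ * Uᵀ := by
  rw [hM, transpose_mul, transpose_mul, diagonal_transpose, transpose_transpose, Matrix.mul_assoc]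

end SVD

lemma tendsto_smul_mulVec {ι q : Type*} [Fintype ι] (W : Matrix q ι ℝ) {r : ℕ → ℝ}
    {x : ℕ → ι → ℝ} {y : ι → ℝ} (h : ∀ i, Tendsto (fun t => r t * x t i) atTop (𝓝 (y i))) :
    Tendsto (fun t => r t • (W *ᵥ x t)) atTop (𝓝 (W *ᵥ y)) := by
  simp_rw [← mulVec_smul]
  exact ((continuous_const.matrix_mulVec continuous_id).tendsto y).comp (tendsto_pi_nhds.2 h)

section CoupledIteration

variable {ι n p : Type*} [Fintype ι] [DecidableEq ι] [Fintype n] [Fintype p]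
  {M : Matrix n p ℝ} {U : Matrix n ι ℝ} {V : Matrix p ι ℝ} {σ : ι → ℝ} {α : ℝ}
  {w1 : ℕ → p → ℝ} {w2 : ℕ → n → ℝ}

theorem coupledIteration_closed_form (hM : M = U * diagonal σ * Vᵀ) (hU : Uᵀ * U = 1)
    (hV : Vᵀ * V = 1) {c : ι → ℝ} (hw1 : w1 0 = V *ᵥ c) (hw2 : w2 0 = 0)
    (hrec1 : ∀ t, w1 (t + 1) = w1 t + α • (Mᵀ *ᵥ w2 t))
    (hrec2 : ∀ t, w2 (t + 1) = w2 t + α • (M *ᵥ w1 t)) (t : ℕ) :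
    w1 t = V *ᵥ (fun i => evenPow (α * σ i) t * c i) ∧
      w2 t = U *ᵥ (fun i => oddPow (α * σ i) t * c i) := by
  induction t with
  | zero => simp [hw1, hw2, ← Pi.zero_def]
  | succ t ih =>
    obtain ⟨ih1, ih2⟩ := ih
    constructor
    · rw [hrec1, ih1, ih2, mulVec_mulVec_of_eq_mul_diagonal_mul_transpose
        (transpose_eq_mul_diagonal_mul_transpose hM) hU, ← mulVec_smul, ← mulVec_add]
      congr 1
      ext i
      simp only [Pi.add_apply, Pi.smul_apply, Pi.mul_apply, smul_eq_mul, evenPow_succ]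
      ring
    · rw [hrec2, ih2, ih1, mulVec_mulVec_of_eq_mul_diagonal_mul_transpose hM hV,
        ← mulVec_smul, ← mulVec_add]
      congr 1
      ext i
      simp only [Pi.add_apply, Pi.smul_apply, Pi.mul_apply, smul_eq_mul, oddPow_succ]
      ring

theorem tendsto_coupledIteration (hM : M = U * diagonal σ * Vᵀ) (hU : Uᵀ * U = 1)
    (hV : Vᵀ * V = 1) {c : ι → ℝ} (hw1 : w1 0 = V *ᵥ c) (hw2 : w2 0 = 0)
    (hrec1 : ∀ t, w1 (t + 1) = w1 t + α • (Mᵀ *ᵥ w2 t))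
    (hrec2 : ∀ t, w2 (t + 1) = w2 t + α • (M *ᵥ w1 t)) (hα : 0 < α) {σmax : ℝ}
    (hσmax : 0 < σmax) (hnn : ∀ i, 0 ≤ σ i) (hle : ∀ i, σ i ≤ σmax) :
    let c' : ι → ℝ := fun i => if σ i = σmax then c i else 0
    Tendsto (fun t => (2 / (1 + α * σmax) ^ t) • w1 t) atTop (𝓝 (V *ᵥ c')) ∧
      Tendsto (fun t => (2 / (1 + α * σmax) ^ t) • w2 t) atTop (𝓝 (U *ᵥ c')) := by
  intro c'
  have hs : 0 < α * σmax := mul_pos hα hσmax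
  have ha (i : ι) : 0 ≤ α * σ i := mul_nonneg hα.le (hnn i)
  have has (i : ι) : α * σ i ≤ α * σmax := mul_le_mul_of_nonneg_left (hle i) hα.le
  have hcoord (i : ι) {f : ℕ → ℝ} (hf : Tendsto (fun t => 2 / (1 + α * σmax) ^ t * f t) atTop
      (𝓝 (if α * σ i = α * σmax then 1 else 0))) :
      Tendsto (fun t => 2 / (1 + α * σmax) ^ t * (f t * c i)) atTop (𝓝 (c' i)) := by
    have hc' : c' i = (if α * σ i = α * σmax then 1 else 0) * c i := by
      simp [c', mul_right_inj' hα.ne']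
    simpa only [hc', mul_assoc] using hf.mul_const (c i)
  have closed := coupledIteration_closed_form hM hU hV hw1 hw2 hrec1 hrec2
  constructor
  · simpa only [(closed _).1] using
      tendsto_smul_mulVec V fun i => hcoord i (tendsto_two_div_pow_mul_evenPow hs (ha i) (has i))
  · simpa only [(closed _).2] using
      tendsto_smul_mulVec U fun i => hcoord i (tendsto_two_div_pow_mul_oddPow hs (ha i) (has i))

end CoupledIteration

lemma Matrix.submatrix_castLE_mulVec {R n : Type*} [Semiring R] {k m : ℕ} (hmk : m ≤ k)
    (A : Matrix n (Fin k) R) (x : Fin k → R) :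
    A.submatrix id (Fin.castLE hmk) *ᵥ (fun p => x (Fin.castLE hmk p)) =
      A *ᵥ fun i => if (i : ℕ) < m then x i else 0 := by
  ext j
  refine Fintype.sum_of_injective (Fin.castLE hmk) (Fin.castLE_injective hmk) _ _ ?_ ?_
  · intro i hi
    have : ¬ (i : ℕ) < m := fun h => hi ⟨⟨i, h⟩, rfl⟩
    simp [this]
  · intro p
    simp [p.isLt]

theorem stmt_3_general (d k m : ℕ) (hk : 0 < k) (hmk : m ≤ k)
    (α : ℝ) (hα : 0 < α)
    (M : Matrix (Fin d) (Fin k) ℝ) (U : Matrix (Fin d) (Fin k) ℝ)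
    (σ : Fin k → ℝ) (V : Matrix (Fin k) (Fin k) ℝ)
    (hSVD : M = U * Matrix.diagonal σ * Vᵀ)
    (hU : Uᵀ * U = 1) (hV : Vᵀ * V = 1) (hV' : V * Vᵀ = 1)
    (hmono : ∀ i j : Fin k, i ≤ j → σ j ≤ σ i) (hnn : ∀ i, 0 ≤ σ i)
    (hσ1 : 0 < σ ⟨0, hk⟩)
    (htop : ∀ i : Fin k, σ i = σ ⟨0, hk⟩ ↔ (i : ℕ) < m)
    (w1 : ℕ → Fin k → ℝ) (w2 : ℕ → Fin d → ℝ)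
    (hinit : w2 0 = 0)
    (hrec1 : ∀ t : ℕ, w1 (t + 1) = w1 t + α • (Mᵀ *ᵥ w2 t))
    (hrec2 : ∀ t : ℕ, w2 (t + 1) = w2 t + α • (M *ᵥ w1 t)) :
    let Vm : Matrix (Fin k) (Fin m) ℝ := V.submatrix id (Fin.castLE hmk)
    let Um : Matrix (Fin d) (Fin m) ℝ := U.submatrix id (Fin.castLE hmk)
    Tendsto (fun t : ℕ => (2 / (1 + α * σ ⟨0, hk⟩) ^ t) • w1 t) atTop
      (nhds (Vm *ᵥ (Vmᵀ *ᵥ w1 0))) ∧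
    Tendsto (fun t : ℕ => (2 / (1 + α * σ ⟨0, hk⟩) ^ t) • w2 t) atTop
      (nhds (Um *ᵥ (Vmᵀ *ᵥ w1 0))) := by
  have hle (i : Fin k) : σ i ≤ σ ⟨0, hk⟩ := hmono _ _ (Nat.zero_le _)
  have hw1 : w1 0 = V *ᵥ (Vᵀ *ᵥ w1 0) := by rw [mulVec_mulVec, hV', one_mulVec]
  have hlimit : (fun i => if σ i = σ ⟨0, hk⟩ then (Vᵀ *ᵥ w1 0) i else 0) =
      fun i : Fin k => if (i : ℕ) < m then (Vᵀ *ᵥ w1 0) i else 0 := by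
    simp_rw [htop]
  obtain ⟨h1, h2⟩ :=
    tendsto_coupledIteration hSVD hU hV hw1 hinit hrec1 hrec2 hα hσ1 hnn hle
  rw [hlimit, ← submatrix_castLE_mulVec hmk] at h1 h2
  exact ⟨h1, h2⟩

theorem stmt_3 (d k m : ℕ) (hkd : k ≤ d) (hk : 0 < k) (hm : 0 < m) (hmk : m ≤ k)
    (α : ℝ) (hα : 0 < α)
    (M : Matrix (Fin d) (Fin k) ℝ) (U : Matrix (Fin d) (Fin k) ℝ)
    (σ : Fin k → ℝ) (V : Matrix (Fin k) (Fin k) ℝ)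
    (hSVD : M = U * Matrix.diagonal σ * Vᵀ)
    (hU : Uᵀ * U = 1) (hV : Vᵀ * V = 1) (hV' : V * Vᵀ = 1)
    (hmono : ∀ i j : Fin k, i ≤ j → σ j ≤ σ i) (hnn : ∀ i, 0 ≤ σ i)
    (hσ1 : 0 < σ ⟨0, hk⟩)
    (htop : ∀ i : Fin k, σ i = σ ⟨0, hk⟩ ↔ (i : ℕ) < m)
    (w1 : ℕ → Fin k → ℝ) (w2 : ℕ → Fin d → ℝ)
    (hinit : w2 0 = 0)
    (hrec1 : ∀ t : ℕ, w1 (t + 1) = w1 t + α • (Mᵀ *ᵥ w2 t))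
    (hrec2 : ∀ t : ℕ, w2 (t + 1) = w2 t + α • (M *ᵥ w1 t)) :
    let Vm : Matrix (Fin k) (Fin m) ℝ := V.submatrix id (Fin.castLE hmk)
    let Um : Matrix (Fin d) (Fin m) ℝ := U.submatrix id (Fin.castLE hmk)
    Tendsto (fun t : ℕ => (2 / (1 + α * σ ⟨0, hk⟩) ^ t) • w1 t) atTop
      (nhds (Vm *ᵥ (Vmᵀ *ᵥ w1 0))) ∧
    Tendsto (fun t : ℕ => (2 / (1 + α * σ ⟨0, hk⟩) ^ t) • w2 t) atTop
      (nhds (Um *ᵥ (Vmᵀ *ᵥ w1 0))) :=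
  stmt_3_general d k m hk hmk α hα M U σ V hSVD hU hV hV' hmono hnn hσ1 htop w1 w2 hinit hrec1 hrec2
end

section
/- Let B ∈ ℝ^{d×k} be a nonnegative matrix such that every column has at least one strictly positive entry, and such that for every 1 ≤ j < k, columns j and j+1 share a common row index at which both entries are strictly positive. Then the matrix A = B^TB ∈ ℝ^{k×k} is primitive: there exists t ≥ 1 such that all entries of A^t are strictly positive. -/
/-!
The Gram matrix `A = BᵀB` is entrywise nonnegative, its diagonal is positive (no column of `B`
vanishes) and so are its entries at `(j, j + 1)` and `(j + 1, j)` (adjacent columns share a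
positive row). A walk of length `s` from `i` to `j` along positive entries makes `(A ^ s) i j`
positive, and the positive diagonal lets such a walk be padded by loops to any greater length,
so one exponent works for all pairs `(i, j)` at once.
-/

open Matrix Relation

theorem Fin.reflTransGen_of_adjacent {k : ℕ} (r : Fin k → Fin k → Prop)
    (h : ∀ i : Fin k, (hi : (i : ℕ) + 1 < k) → r i ⟨i + 1, hi⟩ ∧ r ⟨i + 1, hi⟩ i)
    (i j : Fin k) : ReflTransGen r i j := by
  have hsucc : ∀ a b : Fin k, a < b →
      ∃ ha : (a : ℕ) + 1 < k, Order.succ a = ⟨a + 1, ha⟩ := fun a b hab =>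
    ⟨by omega, (Fin.covBy_iff.2 (Nat.covBy_iff_add_one_eq.2 rfl)).succ_eq⟩
  refine reflTransGen_of_succ r (fun a ha => ?_) (fun a ha => ?_)
  · obtain ⟨ha', hs⟩ := hsucc a j ha.2
    exact hs ▸ (h a ha').1
  · obtain ⟨ha', hs⟩ := hsucc a i ha.2
    exact hs ▸ (h a ha').2

namespace Matrix

section Product

variable {l m n R : Type*} [Fintype m] [Semiring R] [PartialOrder R] [IsStrictOrderedRing R]
  {A : Matrix l m R} {B : Matrix m n R}

theorem mul_apply_nonneg (hA : ∀ i j, 0 ≤ A i j) (hB : ∀ i j, 0 ≤ B i j) (i : l) (j : n) :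
    0 ≤ (A * B) i j :=
  Finset.sum_nonneg fun r _ => mul_nonneg (hA i r) (hB r j)

theorem mul_apply_pos (hA : ∀ i j, 0 ≤ A i j) (hB : ∀ i j, 0 ≤ B i j) {i : l} {r : m} {j : n}
    (hAr : 0 < A i r) (hBr : 0 < B r j) : 0 < (A * B) i j :=
  Finset.sum_pos' (fun s _ => mul_nonneg (hA i s) (hB s j))
    ⟨r, Finset.mem_univ r, mul_pos hAr hBr⟩

end Product

section Power

variable {n R : Type*} [Fintype n] [DecidableEq n] [Semiring R] [PartialOrder R]
  [IsStrictOrderedRing R] {A : Matrix n n R}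

theorem exists_pow_apply_pos_of_reflTransGen (hA : ∀ i j, 0 ≤ A i j) {i j : n}
    (h : ReflTransGen (fun i j => 0 < A i j) i j) : ∃ t, 0 < (A ^ t) i j := by
  induction h with
  | refl => exact ⟨0, by simp⟩
  | tail _ hlj ih =>
    obtain ⟨t, ht⟩ := ih
    exact ⟨t + 1, pow_succ A t ▸ mul_apply_pos (pow_apply_nonneg hA t) hA ht hlj⟩

theorem pow_apply_pos_of_le (hA : ∀ i j, 0 ≤ A i j) (hdiag : ∀ i, 0 < A i i) {i j : n}
    {s t : ℕ} (hs : 0 < (A ^ s) i j) (hst : s ≤ t) : 0 < (A ^ t) i j := by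
  induction t, hst using Nat.le_induction with
  | base => exact hs
  | succ t _ ih => exact pow_succ A t ▸ mul_apply_pos (pow_apply_nonneg hA t) hA ih (hdiag j)

end Power

theorem isPrimitive_of_diag_pos {n R : Type*} [Fintype n] [DecidableEq n] [Ring R] [LinearOrder R]
    [IsStrictOrderedRing R] {A : Matrix n n R} (hA : ∀ i j, 0 ≤ A i j) (hdiag : ∀ i, 0 < A i i)
    (hconn : ∀ i j, ReflTransGen (fun i j => 0 < A i j) i j) : IsPrimitive A := by
  choose t ht using fun i j => exists_pow_apply_pos_of_reflTransGen hA (hconn i j)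
  refine ⟨hA, Finset.univ.sup (fun p : n × n => t p.1 p.2) + 1, Nat.succ_pos _, fun i j => ?_⟩
  refine pow_apply_pos_of_le hA hdiag (ht i j) ?_
  exact (Finset.le_sup (f := fun p : n × n => t p.1 p.2) (Finset.mem_univ (i, j))).trans
    (Nat.le_succ _)

end Matrix

theorem stmt_8 (d k : ℕ) (B : Matrix (Fin d) (Fin k) ℝ)
    (hnn : ∀ i j, 0 ≤ B i j)
    (hcol : ∀ j : Fin k, ∃ i : Fin d, 0 < B i j)
    (hadj : ∀ j : Fin k, (hj : (j : ℕ) + 1 < k) →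
      ∃ i : Fin d, 0 < B i j ∧ 0 < B i ⟨(j : ℕ) + 1, hj⟩) :
    ∃ t : ℕ, 0 < t ∧ ∀ i j : Fin k, 0 < ((Bᵀ * B) ^ t) i j := by
  have hBt : ∀ i j, 0 ≤ Bᵀ i j := fun i j => hnn j i
  have hA : ∀ i j, 0 ≤ (Bᵀ * B) i j := mul_apply_nonneg hBt hnn
  have hdiag : ∀ j, 0 < (Bᵀ * B) j j := fun j =>
    let ⟨r, hr⟩ := hcol j
    mul_apply_pos hBt hnn hr hr
  have hconn := Fin.reflTransGen_of_adjacent (fun i j => 0 < (Bᵀ * B) i j) fun j hj =>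
    let ⟨r, hj, hj'⟩ := hadj j hj
    ⟨mul_apply_pos hBt hnn hj hj', mul_apply_pos hBt hnn hj' hj⟩
  exact (isPrimitive_of_diag_pos hA hdiag hconn).exists_pos_pow
end

section
/- Fix d, k, and a finite set S ⊆ {1,...,d}. Suppose each element of S is ≥ k and any two distinct elements of S differ by at least 2k. Define M ∈ ℝ^{d×k} by M_{i,j} = (1/|S|)·[i+j-1 ∈ S] (indicator, averaged). Then M^TM = (1/|S|)·I_k. -/
/-!
Entry `(j, j')` of `MᵀM` is `|S|⁻²` times the number of rows `i` with `i + j + 1` and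
`i + j' + 1` both in `S`. On the diagonal `i ↦ i + j + 1` matches these rows with `S`, since
`j < k ≤ l ≤ d` for every `l ∈ S`. Off the diagonal two such elements of `S` would differ by
`|j - j'| < k`, which the separation forbids.
-/

open Matrix

open Finset

theorem Matrix.transpose_mul_self_apply_eq_card {m n R : Type*} [Fintype m] [CommSemiring R]
    {M : Matrix m n R} (c : R) (P : m → n → Prop) [∀ i j, Decidable (P i j)]
    (hM : ∀ i j, M i j = c * if P i j then 1 else 0) (j j' : n) :
    (Mᵀ * M) j j' = c ^ 2 * #{i | P i j ∧ P i j'} := by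
  simp only [mul_apply, transpose_apply, hM, mul_mul_mul_comm, ite_zero_mul_ite_zero, mul_one,
    ← Finset.mul_sum, Finset.sum_boole, sq]

theorem card_filter_add_mem_eq_card {S : Finset ℕ} {d j : ℕ}
    (hS : ∀ l ∈ S, j < l ∧ l ≤ d + j) :
    #{i : Fin d | (i : ℕ) + j + 1 ∈ S} = #S := by
  refine card_bij (fun i _ => (i : ℕ) + j + 1) (fun i hi => (mem_filter.mp hi).2)
    (fun a _ b _ hab => Fin.ext (by omega)) fun l hl => ?_
  obtain ⟨hjl, hld⟩ := hS l hl
  have hl' : l - j - 1 + j + 1 = l := by omega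
  exact ⟨⟨l - j - 1, by omega⟩, by simpa only [mem_filter, mem_univ, true_and, hl'], hl'⟩

theorem not_add_mem_and_add_mem_of_separated {S : Finset ℕ} {k : ℕ}
    (hsep : ∀ l ∈ S, ∀ l' ∈ S, l ≠ l' → k ≤ ((l : ℤ) - l').natAbs)
    {j j' : ℕ} (hj : j < k) (hj' : j' < k) (hne : j ≠ j') (a : ℕ) :
    ¬ (a + j ∈ S ∧ a + j' ∈ S) := fun ⟨h, h'⟩ => by
  have := hsep _ h _ h' (by omega)
  omega

theorem stmt_9_general (d k : ℕ) (S : Finset ℕ)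
    (hSsub : ∀ l ∈ S, 1 ≤ l ∧ l ≤ d)
    (hge : ∀ l ∈ S, k ≤ l)
    (hsep : ∀ l ∈ S, ∀ l' ∈ S, l ≠ l' → 2 * k ≤ ((l : ℤ) - l').natAbs) :
    let M : Matrix (Fin d) (Fin k) ℝ :=
      fun i j => (1 / (S.card : ℝ)) * (if (i : ℕ) + (j : ℕ) + 1 ∈ S then 1 else 0)
    Mᵀ * M = (1 / (S.card : ℝ)) • (1 : Matrix (Fin k) (Fin k) ℝ) := by
  intro M
  ext j j'
  rw [transpose_mul_self_apply_eq_card _ _ fun _ _ => rfl, Matrix.smul_apply, one_apply,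
    smul_eq_mul]
  rcases eq_or_ne j j' with rfl | hne
  · have hS : ∀ l ∈ S, (j : ℕ) < l ∧ l ≤ d + j := fun l hl =>
      ⟨j.isLt.trans_le (hge l hl), (hSsub l hl).2.trans (Nat.le_add_right d j)⟩
    simp only [and_self, card_filter_add_mem_eq_card hS, if_true, mul_one, one_div]
    -- `n⁻¹ * n⁻¹ * n = n⁻¹` holds also for `n = 0`, i.e. for `S = ∅`.
    simpa only [sq, inv_inv] using mul_self_mul_inv (#S : ℝ)⁻¹
  · have hdisj : #{i : Fin d | (i : ℕ) + j + 1 ∈ S ∧ (i : ℕ) + j' + 1 ∈ S} = 0 := by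
      refine card_eq_zero.mpr (filter_false_of_mem fun i _ => ?_)
      simpa only [add_right_comm] using not_add_mem_and_add_mem_of_separated
        (fun l hl l' hl' h => (Nat.le_mul_of_pos_left k two_pos).trans (hsep l hl l' hl' h))
        j.isLt j'.isLt (Fin.val_ne_of_ne hne) ((i : ℕ) + 1)
    simp [hdisj, hne]

theorem stmt_9 (d k : ℕ) (hk : 0 < k) (S : Finset ℕ) (hSne : S.Nonempty)
    (hSsub : ∀ l ∈ S, 1 ≤ l ∧ l ≤ d)
    (hge : ∀ l ∈ S, k ≤ l)
    (hsep : ∀ l ∈ S, ∀ l' ∈ S, l ≠ l' → 2 * k ≤ ((l : ℤ) - l').natAbs) :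
    let M : Matrix (Fin d) (Fin k) ℝ :=
      fun i j => (1 / (S.card : ℝ)) * (if (i : ℕ) + (j : ℕ) + 1 ∈ S then 1 else 0)
    Mᵀ * M = (1 / (S.card : ℝ)) • (1 : Matrix (Fin k) (Fin k) ℝ) :=
  stmt_9_general d k S hSsub hge hsep
end
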